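/- arXiv:1711.03801 — 2 statements merged into one kernel-verified Lean document; each statement's English description precedes it below -/
import Mathlib

section
/- Let c ∈ (−1,1) and let T ∈ B(H,K) be a nonzero bounded linear map between real Hilbert spaces. Then there exists ε ∈ [0, 1+|c|) such that T is (ε,c)-angle preserving if and only if T is bounded below (i.e., [T] > 0). -/
/-!
If `[T] > 0`, applying `‖T w‖ ≥ [T] ‖w‖` to `w = ‖T y‖ x ∓ ‖T x‖ y` bounds `⟪T x, T y⟫` on both
sides, and with `‖T x‖ ‖T y‖ ≤ ‖T‖² ‖x‖ ‖y‖` this makes `T` angle preserving with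
`ε = (1 + |c|) (1 - [T]² / ‖T‖²) < 1 + |c|`.

Conversely, testing `(ε, c)`-angle preservation with `ε < 1 + |c|` on two unit vectors at angle
`c` built from an orthonormal pair `e, f` gives `‖T f‖ ≤ C ‖T e‖`. Splitting an arbitrary unit
vector `g` along `e` then gives `‖T g‖ ≤ (1 + C) ‖T e‖` for all unit `e, g`, so `[T] > 0` as soon
as `T ≠ 0`.
-/

open scoped RealInnerProductSpace

/-- The minimum modulus `[T]` of a bounded linear map: the infimum of `‖T x‖`
over unit vectors `x`. -/
noncomputable def minMod {H K : Type*} [NormedAddCommGroup H] [InnerProductSpace ℝ H]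
    [NormedAddCommGroup K] [InnerProductSpace ℝ K] (T : H →L[ℝ] K) : ℝ :=
  ⨅ x : {x : H // ‖x‖ = 1}, ‖T x‖

/-- `T` is `(ε, c)`-angle preserving. -/
def AnglePres {H K : Type*} [NormedAddCommGroup H] [InnerProductSpace ℝ H]
    [NormedAddCommGroup K] [InnerProductSpace ℝ K] (c ε : ℝ) (T : H →L[ℝ] K) : Prop :=
  ∀ x y : H, ⟪x, y⟫ = c * ‖x‖ * ‖y‖ →
    |⟪T x, T y⟫ - c * ‖T x‖ * ‖T y‖| ≤ ε * ‖T x‖ * ‖T y‖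

/-- `ε̂(T, c)`: the smallest `ε` for which `T` is `(ε, c)`-angle preserving. -/
noncomputable def epsHat {H K : Type*} [NormedAddCommGroup H] [InnerProductSpace ℝ H]
    [NormedAddCommGroup K] [InnerProductSpace ℝ K] (c : ℝ) (T : H →L[ℝ] K) : ℝ :=
  sInf {ε : ℝ | ε ∈ Set.Icc 0 (1 + |c|) ∧ AnglePres c ε T}

theorem real_inner_add_sub_eq_norm_sq_sub_norm_sq {E : Type*} [NormedAddCommGroup E]
    [InnerProductSpace ℝ E] (u v : E) : ⟪u + v, u - v⟫ = ‖u‖ ^ 2 - ‖v‖ ^ 2 := by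
  rw [inner_add_left, inner_sub_right, inner_sub_right, real_inner_comm u v,
    real_inner_self_eq_norm_sq, real_inner_self_eq_norm_sq]
  ring

section

variable {H K : Type*} [NormedAddCommGroup H] [InnerProductSpace ℝ H]
  [NormedAddCommGroup K] [InnerProductSpace ℝ K]

namespace AnglePres

variable {c ε : ℝ} {T : H →L[ℝ] K}

theorem mono {ε' : ℝ} (h : AnglePres c ε T) (hε : ε ≤ ε') : AnglePres c ε' T := fun x y hxy =>
  (h x y hxy).trans <| by gcongr

theorem neg (h : AnglePres c ε T) : AnglePres (-c) ε T := by
  intro x y hxy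
  have := h x (-y) (by rw [inner_neg_right, hxy, norm_neg]; ring)
  rwa [map_neg, inner_neg_right, norm_neg, ← abs_neg, neg_sub', neg_neg,
    ← neg_mul, ← neg_mul] at this

/-- For `x = A e + B f` and `z = A e - B f` with `A² = (1 + c)/2`, `B² = (1 - c)/2`, the
unit vectors `x, z` make the angle `c`, while `⟪T x, T z⟫ = ‖A T e‖² - ‖B T f‖²` and
`‖T x‖ ‖T z‖ ≤ ‖A T e‖² + ‖B T f‖²`; so `T f` cannot be much longer than `T e`. -/
theorem sq_norm_apply_le (h : AnglePres c ε T) (hc : |c| ≤ 1) (hcε : c ≤ ε) {e f : H}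
    (he : ‖e‖ = 1) (hf : ‖f‖ = 1) (hef : ⟪e, f⟫ = 0) :
    (1 - (ε - c)) * (1 - c) * ‖T f‖ ^ 2 ≤ (1 + (ε - c)) * (1 + c) * ‖T e‖ ^ 2 := by
  obtain ⟨hc₁, hc₂⟩ := abs_le.1 hc
  set A := √((1 + c) / 2)
  set B := √((1 - c) / 2)
  have hA : A ^ 2 = (1 + c) / 2 := Real.sq_sqrt (by linarith)
  have hB : B ^ 2 = (1 - c) / 2 := Real.sq_sqrt (by linarith)
  have hAB : ⟪A • e, B • f⟫ = 0 := by rw [real_inner_smul_left, real_inner_smul_right, hef]; ring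
  have hAe : ‖A • e‖ ^ 2 = A ^ 2 := by rw [norm_smul, he, mul_one, Real.norm_eq_abs, sq_abs]
  have hBf : ‖B • f‖ ^ 2 = B ^ 2 := by rw [norm_smul, hf, mul_one, Real.norm_eq_abs, sq_abs]
  have hx : ‖A • e + B • f‖ = 1 := by
    rw [← pow_eq_one_iff_of_nonneg (norm_nonneg _) two_ne_zero, norm_add_sq_real, hAB,
      hAe, hBf, hA, hB]
    ring
  have hz : ‖A • e - B • f‖ = 1 := by
    rw [← pow_eq_one_iff_of_nonneg (norm_nonneg _) two_ne_zero, norm_sub_sq_real, hAB,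
      hAe, hBf, hA, hB]
    ring
  have hxz : ⟪A • e + B • f, A • e - B • f⟫ = c * ‖A • e + B • f‖ * ‖A • e - B • f‖ := by
    rw [real_inner_add_sub_eq_norm_sq_sub_norm_sq, hAe, hBf, hA, hB, hx, hz]
    ring
  have hangle := h _ _ hxz
  set u := A • T e
  set v := B • T f
  have hTx : T (A • e + B • f) = u + v := by rw [map_add, map_smul, map_smul]
  have hTz : T (A • e - B • f) = u - v := by rw [map_sub, map_smul, map_smul]
  rw [hTx, hTz, real_inner_add_sub_eq_norm_sq_sub_norm_sq] at hangle
  have hprod : ‖u + v‖ * ‖u - v‖ ≤ ‖u‖ ^ 2 + ‖v‖ ^ 2 := by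
    nlinarith [parallelogram_law_with_norm ℝ u v, sq_nonneg (‖u + v‖ - ‖u - v‖)]
  have hu : ‖u‖ ^ 2 = (1 + c) / 2 * ‖T e‖ ^ 2 := by
    rw [norm_smul, mul_pow, Real.norm_eq_abs, sq_abs, hA]
  have hv : ‖v‖ ^ 2 = (1 - c) / 2 * ‖T f‖ ^ 2 := by
    rw [norm_smul, mul_pow, Real.norm_eq_abs, sq_abs, hB]
  have hlow := (abs_le.1 hangle).1
  nlinarith [mul_le_mul_of_nonneg_left hprod (sub_nonneg.2 hcε)]

theorem exists_norm_apply_le_mul (h : AnglePres c ε T) (hc : |c| < 1) (hε : ε < 1 + |c|) :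
    ∃ C, 0 ≤ C ∧ ∀ e f : H, ‖e‖ = 1 → ‖f‖ = 1 → ⟪e, f⟫ = 0 → ‖T f‖ ≤ C * ‖T e‖ := by
  have habs : AnglePres |c| ε T := by
    rcases abs_cases c with ⟨hc, -⟩ | ⟨hc, -⟩ <;> rw [hc]
    exacts [h, h.neg]
  set ε' := max ε |c|
  have hε' : ε' - |c| < 1 := by
    rw [sub_lt_iff_lt_add, max_lt_iff]; constructor <;> linarith
  set a := (1 - (ε' - |c|)) * (1 - |c|)
  set b := (1 + (ε' - |c|)) * (1 + |c|)
  have ha : 0 < a := mul_pos (by linarith) (by linarith)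
  have hb : 0 ≤ b := mul_nonneg (by linarith [le_max_right ε |c|]) (by positivity)
  refine ⟨√(b / a), Real.sqrt_nonneg _, fun e f he hf hef => le_of_sq_le_sq ?_ (by positivity)⟩
  have hsq := (habs.mono (le_max_left ε |c|)).sq_norm_apply_le (by rw [abs_abs]; exact hc.le)
    (le_max_right ε |c|) he hf hef
  rw [mul_pow, Real.sq_sqrt (div_nonneg hb ha.le), div_mul_eq_mul_div, le_div_iff₀ ha, mul_comm]
  exact hsq

end AnglePres

theorem minMod_nonneg (T : H →L[ℝ] K) : 0 ≤ minMod T :=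
  Real.iInf_nonneg fun _ => norm_nonneg _

theorem minMod_mul_norm_le (T : H →L[ℝ] K) (x : H) : minMod T * ‖x‖ ≤ ‖T x‖ := by
  rcases eq_or_ne x 0 with rfl | hx
  · simp
  have hbdd : BddBelow (Set.range fun u : {u : H // ‖u‖ = 1} => ‖T u‖) :=
    ⟨0, by rintro _ ⟨u, rfl⟩; positivity⟩
  have hle := ciInf_le hbdd ⟨‖x‖⁻¹ • x, norm_smul_inv_norm hx⟩
  rw [map_smul, norm_smul, norm_inv, norm_norm, inv_mul_eq_div,
    le_div_iff₀ (norm_pos_iff.2 hx)] at hle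
  exact hle

theorem minMod_le_opNorm (T : H →L[ℝ] K) : minMod T ≤ ‖T‖ := by
  rcases isEmpty_or_nonempty {x : H // ‖x‖ = 1} with hH | ⟨⟨u, hu⟩⟩
  · rw [minMod, Real.iInf_of_isEmpty]
    exact norm_nonneg T
  · simpa [hu] using (minMod_mul_norm_le T u).trans (T.le_opNorm u)

theorem norm_apply_le_of_forall_orthonormal {T : H →L[ℝ] K} {C : ℝ} (hC : 0 ≤ C)
    (h : ∀ e f : H, ‖e‖ = 1 → ‖f‖ = 1 → ⟪e, f⟫ = 0 → ‖T f‖ ≤ C * ‖T e‖)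
    {e g : H} (he : ‖e‖ = 1) (hg : ‖g‖ = 1) : ‖T g‖ ≤ (1 + C) * ‖T e‖ := by
  set f₀ := g - ⟪e, g⟫ • e
  have hef₀ : ⟪e, f₀⟫ = 0 := by
    rw [inner_sub_right, real_inner_smul_right, real_inner_self_eq_norm_sq, he]; ring
  have hf₀ : ‖f₀‖ ≤ 1 := by
    refine le_of_sq_le_sq ?_ zero_le_one
    have hpyth : ‖f₀ + ⟪e, g⟫ • e‖ ^ 2 = ‖f₀‖ ^ 2 + ‖⟪e, g⟫ • e‖ ^ 2 := by
      rw [norm_add_sq_real, real_inner_smul_right, real_inner_comm e f₀, hef₀]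
      ring
    rw [sub_add_cancel, hg] at hpyth
    nlinarith [sq_nonneg ‖⟪e, g⟫ • e‖]
  have hTf₀ : ‖T f₀‖ ≤ C * ‖T e‖ := by
    rcases eq_or_ne f₀ 0 with h0 | h0
    · rw [h0, map_zero, norm_zero]; positivity
    have hunit := h e (‖f₀‖⁻¹ • f₀) he (norm_smul_inv_norm h0)
      (by rw [real_inner_smul_right, hef₀, mul_zero])
    rw [map_smul, norm_smul, norm_inv, norm_norm, inv_mul_le_iff₀ (norm_pos_iff.2 h0)] at hunit
    exact hunit.trans (mul_le_of_le_one_left (by positivity) hf₀)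
  have hcoef : ‖⟪e, g⟫ • T e‖ ≤ ‖T e‖ := by
    rw [norm_smul]
    refine mul_le_of_le_one_left (norm_nonneg _) ?_
    simpa [he, hg] using abs_real_inner_le_norm e g
  calc ‖T g‖ = ‖⟪e, g⟫ • T e + T f₀‖ := by rw [← map_smul, ← map_add, add_sub_cancel]
    _ ≤ ‖T e‖ + C * ‖T e‖ := (norm_add_le _ _).trans (add_le_add hcoef hTf₀)
    _ = (1 + C) * ‖T e‖ := by ring

theorem exists_norm_eq_one_apply_ne_zero {T : H →L[ℝ] K} (hT : T ≠ 0) :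
    ∃ g : H, ‖g‖ = 1 ∧ T g ≠ 0 := by
  obtain ⟨x, hx⟩ : ∃ x, T x ≠ 0 := by
    by_contra! h
    exact hT (ContinuousLinearMap.ext h)
  have hx0 : x ≠ 0 := fun h => hx (by rw [h, map_zero])
  exact ⟨‖x‖⁻¹ • x, norm_smul_inv_norm hx0, by
    rw [map_smul]; exact smul_ne_zero (inv_ne_zero (norm_ne_zero_iff.2 hx0)) hx⟩

theorem minMod_pos_of_forall_orthonormal {T : H →L[ℝ] K} (hT : T ≠ 0) {C : ℝ} (hC : 0 ≤ C)
    (h : ∀ e f : H, ‖e‖ = 1 → ‖f‖ = 1 → ⟪e, f⟫ = 0 → ‖T f‖ ≤ C * ‖T e‖) : 0 < minMod T := by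
  obtain ⟨g, hg, hTg⟩ := exists_norm_eq_one_apply_ne_zero hT
  have : Nonempty {x : H // ‖x‖ = 1} := ⟨⟨g, hg⟩⟩
  refine lt_of_lt_of_le (by positivity : 0 < ‖T g‖ / (1 + C)) (le_ciInf fun e => ?_)
  rw [div_le_iff₀' (by positivity)]
  exact norm_apply_le_of_forall_orthonormal hC h e.2 hg

theorem minMod_sq_div_opNorm_sq_le_one (T : H →L[ℝ] K) : minMod T ^ 2 / ‖T‖ ^ 2 ≤ 1 :=
  div_le_one_of_le₀ (pow_le_pow_left₀ (minMod_nonneg T) (minMod_le_opNorm T) 2) (by positivity)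

theorem minMod_sq_mul_sub_inner_le (T : H →L[ℝ] K) {x y : H} (hx : T x ≠ 0) (hy : T y ≠ 0) :
    minMod T ^ 2 * (‖x‖ * ‖y‖ - ⟪x, y⟫) ≤ ‖T x‖ * ‖T y‖ - ⟪T x, T y⟫ := by
  set p := ‖T x‖
  set q := ‖T y‖
  have hp : 0 < p := norm_pos_iff.2 hx
  have hq : 0 < q := norm_pos_iff.2 hy
  set w := q • x - p • y
  have hTw : ‖T w‖ ^ 2 = 2 * p * q * (p * q - ⟪T x, T y⟫) := by
    rw [map_sub, map_smul, map_smul, norm_sub_sq_real, norm_smul_of_nonneg hq.le,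
      norm_smul_of_nonneg hp.le, real_inner_smul_left, real_inner_smul_right]
    ring
  have hw : 2 * p * q * (‖x‖ * ‖y‖ - ⟪x, y⟫) ≤ ‖w‖ ^ 2 := by
    rw [norm_sub_sq_real, norm_smul_of_nonneg hq.le, norm_smul_of_nonneg hp.le,
      real_inner_smul_left, real_inner_smul_right]
    nlinarith [sq_nonneg (q * ‖x‖ - p * ‖y‖)]
  have hmw : (minMod T * ‖w‖) ^ 2 ≤ ‖T w‖ ^ 2 :=
    pow_le_pow_left₀ (mul_nonneg (minMod_nonneg T) (norm_nonneg w)) (minMod_mul_norm_le T w) 2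
  refine le_of_mul_le_mul_left ?_ (by positivity : 0 < 2 * p * q)
  calc 2 * p * q * (minMod T ^ 2 * (‖x‖ * ‖y‖ - ⟪x, y⟫))
      = minMod T ^ 2 * (2 * p * q * (‖x‖ * ‖y‖ - ⟪x, y⟫)) := by ring
    _ ≤ minMod T ^ 2 * ‖w‖ ^ 2 := by gcongr
    _ ≤ 2 * p * q * (p * q - ⟪T x, T y⟫) := by rw [← hTw, ← mul_pow]; exact hmw

theorem anglePres_minMod {c : ℝ} (hc : |c| ≤ 1) {T : H →L[ℝ] K} (hT : T ≠ 0) :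
    AnglePres c ((1 + |c|) * (1 - minMod T ^ 2 / ‖T‖ ^ 2)) T := by
  intro x y hxy
  rcases eq_or_ne (T x) 0 with hx | hx
  · simp [hx]
  rcases eq_or_ne (T y) 0 with hy | hy
  · simp [hy]
  have h₁ := minMod_sq_mul_sub_inner_le T hx hy
  have h₂ := minMod_sq_mul_sub_inner_le T hx (y := -y) (by rwa [map_neg, neg_ne_zero])
  rw [map_neg, norm_neg, norm_neg, inner_neg_right, inner_neg_right, sub_neg_eq_add,
    sub_neg_eq_add] at h₂
  rw [hxy] at h₁ h₂
  set k := minMod T ^ 2 / ‖T‖ ^ 2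
  have hM : 0 < ‖T‖ := norm_pos_iff.2 hT
  have hk₁ : 0 ≤ 1 - k := sub_nonneg.2 (minMod_sq_div_opNorm_sq_le_one T)
  have hpq : k * (‖T x‖ * ‖T y‖) ≤ minMod T ^ 2 * (‖x‖ * ‖y‖) := by
    calc k * (‖T x‖ * ‖T y‖) ≤ k * (‖T‖ * ‖x‖ * (‖T‖ * ‖y‖)) := by
          gcongr
          exacts [T.le_opNorm x, T.le_opNorm y]
      _ = minMod T ^ 2 * (‖x‖ * ‖y‖) := by simp only [k]; field_simp
  obtain ⟨hc₁, hc₂⟩ := abs_le.1 hc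
  have hpq₀ : 0 ≤ (1 - k) * (‖T x‖ * ‖T y‖) := by positivity
  rw [abs_le]
  constructor
  · linarith [mul_nonneg (by linarith : 0 ≤ 1 + c) (sub_nonneg.2 hpq),
      mul_nonneg (by linarith [le_abs_self c, neg_abs_le c] : 0 ≤ |c| - c) hpq₀]
  · linarith [mul_nonneg (by linarith : 0 ≤ 1 - c) (sub_nonneg.2 hpq),
      mul_nonneg (by linarith [neg_abs_le c] : 0 ≤ |c| + c) hpq₀]

end

theorem stmt_13_general {H K : Type*} [NormedAddCommGroup H] [InnerProductSpace ℝ H]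
    [NormedAddCommGroup K] [InnerProductSpace ℝ K]
    (c : ℝ) (hc : c ∈ Set.Ioo (-1 : ℝ) 1) (T : H →L[ℝ] K) (hT : T ≠ 0) :
    (∃ ε : ℝ, ε ∈ Set.Ico 0 (1 + |c|) ∧ AnglePres c ε T) ↔ 0 < minMod T := by
  have hc' : |c| < 1 := abs_lt.2 hc
  constructor
  · rintro ⟨ε, ⟨-, hε⟩, h⟩
    obtain ⟨C, hC, hTC⟩ := h.exists_norm_apply_le_mul hc' hε
    exact minMod_pos_of_forall_orthonormal hT hC hTC
  · intro hm
    have hk := minMod_sq_div_opNorm_sq_le_one T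
    have hk₀ : 0 < minMod T ^ 2 / ‖T‖ ^ 2 := by
      have hM : 0 < ‖T‖ := norm_pos_iff.2 hT
      positivity
    refine ⟨_, ⟨mul_nonneg (by positivity) (sub_nonneg.2 hk), ?_⟩, anglePres_minMod hc'.le hT⟩
    exact mul_lt_of_lt_one_right (by positivity) (sub_lt_self 1 hk₀)

theorem stmt_13 {H K : Type*} [NormedAddCommGroup H] [InnerProductSpace ℝ H] [CompleteSpace H]
    [NormedAddCommGroup K] [InnerProductSpace ℝ K] [CompleteSpace K]
    (hH : 2 ≤ Module.rank ℝ H)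
    (c : ℝ) (hc : c ∈ Set.Ioo (-1 : ℝ) 1) (T : H →L[ℝ] K) (hT : T ≠ 0) :
    (∃ ε : ℝ, ε ∈ Set.Ico 0 (1 + |c|) ∧ AnglePres c ε T) ↔ 0 < minMod T :=
  stmt_13_general c hc T hT
end

section
/- Let c ∈ (−1,1) and let T ∈ B(H) be a bounded linear bijection with bounded inverse. Then ε̂(T⁻¹, c) = ε̂(T, c). -/
open scoped RealInnerProductSpace

/-!
Since `T` is the inverse of `T⁻¹`, it suffices to show that `T⁻¹` is `(ε̂(T, c), c)`-angle
preserving. Let `x, y` be unit vectors whose images under `T` make the angle `c`. The plane spanned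
by `x, y` has an orthonormal basis `e₁, e₂` with `T e₁ ⊥ T e₂` and `μ₁ = ‖T e₁‖² ≥ μ₂ = ‖T e₂‖² > 0`.
Testing the angle condition for `T` on the pair `√(1 + c) e₁ ± √(1 - c) e₂` (with `e₁, e₂` swapped
when `c ≥ 0`) gives `ε̂(T, c) ≥ (1 - c²)(μ₁ - μ₂) / ((1 - |c|) μ₁ + (1 + |c|) μ₂)`, and writing
`x, y` in this basis shows that `|⟪x, y⟫ - c|` is at most the same quantity.
-/

open Submodule

theorem exists_sq_add_sq_eq_one_mul_add_mul_eq_zero (A B : ℝ) :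
    ∃ p q : ℝ, p ^ 2 + q ^ 2 = 1 ∧ A * (p * q) + B * (p ^ 2 - q ^ 2) = 0 := by
  set z : ℂ := ⟨A, -2 * B⟩
  set θ := z.arg / 2
  have hcos : ‖z‖ * (2 * Real.cos θ ^ 2 - 1) = A := by
    rw [← Real.cos_two_mul, show 2 * θ = z.arg by ring]; exact Complex.norm_mul_cos_arg z
  have hsin : ‖z‖ * (2 * Real.sin θ * Real.cos θ) = -2 * B := by
    rw [← Real.sin_two_mul, show 2 * θ = z.arg by ring]; exact Complex.norm_mul_sin_arg z
  refine ⟨Real.cos θ, Real.sin θ, Real.cos_sq_add_sin_sq θ, ?_⟩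
  rcases eq_or_ne ‖z‖ 0 with hz | hz
  · rw [hz, zero_mul] at hcos hsin
    obtain rfl : B = 0 := by linarith
    rw [← hcos]; ring
  · refine mul_left_cancel₀ hz ?_
    linear_combination (A / 2) * hsin + B * hcos - B * ‖z‖ * Real.cos_sq_add_sin_sq θ

theorem abs_le_abs_mul_sub_of_sq_eq {a b μ P : ℝ} (hμ : 0 ≤ μ)
    (h : P ^ 2 = (a ^ 2 - μ) * (b ^ 2 - μ)) : |P| ≤ |a * b - μ| :=
  sq_le_sq.1 <| by nlinarith [mul_nonneg hμ (sq_nonneg (a - b))]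

theorem abs_sub_mul_le_of_abs_mul_sub_le {c d t μ₁ μ₂ : ℝ} (hc : |c| ≤ 1) (hμ : μ₂ ≤ μ₁)
    (h₁ : |c * t - d * μ₁| ≤ μ₁ - t) (h₂ : |c * t - d * μ₂| ≤ t - μ₂) :
    |d - c| * ((1 - |c|) * μ₁ + (1 + |c|) * μ₂) ≤ (1 - c ^ 2) * (μ₁ - μ₂) := by
  obtain ⟨h₁l, h₁r⟩ := abs_le.1 h₁
  obtain ⟨h₂l, h₂r⟩ := abs_le.1 h₂
  obtain ⟨hc₁, hc₂⟩ := abs_le.1 hc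
  have h1c : 0 ≤ 1 - c := by linarith
  have h1c' : 0 ≤ 1 + c := by linarith
  -- `(1 ± d) μ₂ ≤ (1 ± c) t` and `(1 ∓ c) t ≤ (1 ∓ d) μ₁`; eliminate `t`
  have hp : (1 + d) * (1 - c) * μ₂ ≤ (1 - d) * (1 + c) * μ₁ := by
    linarith [mul_le_mul_of_nonneg_left h₂l h1c, mul_le_mul_of_nonneg_left h₁l h1c']
  have hm : (1 - d) * (1 + c) * μ₂ ≤ (1 + d) * (1 - c) * μ₁ := by
    linarith [mul_le_mul_of_nonneg_left h₂r h1c', mul_le_mul_of_nonneg_left h₁r h1c]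
  rcases le_total c d with hcd | hdc
  · rw [abs_of_nonneg (sub_nonneg.2 hcd)]
    have hc₀ : 0 ≤ c + |c| := by linarith [neg_abs_le c]
    linarith [mul_nonneg (sub_nonneg.2 hcd) (mul_nonneg hc₀ (sub_nonneg.2 hμ))]
  · rw [abs_of_nonpos (sub_nonpos.2 hdc)]
    have hc₀ : 0 ≤ |c| - c := by linarith [le_abs_self c]
    linarith [mul_nonneg (sub_nonneg.2 hdc) (mul_nonneg hc₀ (sub_nonneg.2 hμ))]

theorem abs_sub_mul_le_of_coords {μ₁ μ₂ c x₁ x₂ y₁ y₂ a b : ℝ} (hμ₂ : 0 ≤ μ₂) (hμ : μ₂ ≤ μ₁)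
    (hc : |c| ≤ 1) (hx : x₁ ^ 2 + x₂ ^ 2 = 1) (hy : y₁ ^ 2 + y₂ ^ 2 = 1) (ha₀ : 0 ≤ a) (hb₀ : 0 ≤ b)
    (ha : a ^ 2 = μ₁ * x₁ ^ 2 + μ₂ * x₂ ^ 2) (hb : b ^ 2 = μ₁ * y₁ ^ 2 + μ₂ * y₂ ^ 2)
    (hab : μ₁ * x₁ * y₁ + μ₂ * x₂ * y₂ = c * a * b) :
    |x₁ * y₁ + x₂ * y₂ - c| * ((1 - |c|) * μ₁ + (1 + |c|) * μ₂) ≤ (1 - c ^ 2) * (μ₁ - μ₂) := by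
  -- for `μ = μ₁, μ₂` the form `(μ₁ - μ) x₁ y₁ + (μ₂ - μ) x₂ y₂` has rank one, hence
  -- `(c a b - μ (x₁ y₁ + x₂ y₂))² = (a² - μ) (b² - μ)`
  have ha₂ : a ^ 2 - μ₂ = (μ₁ - μ₂) * x₁ ^ 2 := by linear_combination ha + μ₂ * hx
  have hb₂ : b ^ 2 - μ₂ = (μ₁ - μ₂) * y₁ ^ 2 := by linear_combination hb + μ₂ * hy
  have ha₁ : a ^ 2 - μ₁ = (μ₂ - μ₁) * x₂ ^ 2 := by linear_combination ha + μ₁ * hx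
  have hb₁ : b ^ 2 - μ₁ = (μ₂ - μ₁) * y₂ ^ 2 := by linear_combination hb + μ₁ * hy
  have hμ₂ab : μ₂ ≤ a * b := by
    refine (pow_le_pow_iff_left₀ hμ₂ (mul_nonneg ha₀ hb₀) two_ne_zero).1 ?_
    rw [mul_pow, sq μ₂]
    exact mul_le_mul (by nlinarith) (by nlinarith) hμ₂ (sq_nonneg a)
  have habμ₁ : a * b ≤ μ₁ := by
    refine (pow_le_pow_iff_left₀ (mul_nonneg ha₀ hb₀) (hμ₂.trans hμ) two_ne_zero).1 ?_
    rw [mul_pow, sq μ₁]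
    exact mul_le_mul (by nlinarith) (by nlinarith) (sq_nonneg b) (hμ₂.trans hμ)
  refine abs_sub_mul_le_of_abs_mul_sub_le (t := a * b) hc hμ ?_ ?_
  · rw [← abs_of_nonneg (sub_nonneg.2 habμ₁), abs_sub_comm μ₁]
    refine abs_le_abs_mul_sub_of_sq_eq (hμ₂.trans hμ) ?_
    rw [ha₁, hb₁, show c * (a * b) - (x₁ * y₁ + x₂ * y₂) * μ₁ = (μ₂ - μ₁) * x₂ * y₂ by
      linear_combination -hab]
    ring
  · rw [← abs_of_nonneg (sub_nonneg.2 hμ₂ab)]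
    refine abs_le_abs_mul_sub_of_sq_eq hμ₂ ?_
    rw [ha₂, hb₂, show c * (a * b) - (x₁ * y₁ + x₂ * y₂) * μ₂ = (μ₁ - μ₂) * x₁ * y₁ by
      linear_combination -hab]
    ring

section

variable {E F : Type*} [NormedAddCommGroup E] [InnerProductSpace ℝ E]
  [NormedAddCommGroup F] [InnerProductSpace ℝ F]

theorem inner_smul_add_smul_of_inner_eq_zero {a b : E} (h : ⟪a, b⟫ = 0) (α β γ δ : ℝ) :
    ⟪α • a + β • b, γ • a + δ • b⟫ = α * γ * ‖a‖ ^ 2 + β * δ * ‖b‖ ^ 2 := by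
  simp only [inner_add_left, inner_add_right, real_inner_smul_left, real_inner_smul_right,
    real_inner_comm a b, h, real_inner_self_eq_norm_sq]
  ring

theorem norm_smul_add_smul_sq_of_inner_eq_zero {a b : E} (h : ⟪a, b⟫ = 0) (α β : ℝ) :
    ‖α • a + β • b‖ ^ 2 = α ^ 2 * ‖a‖ ^ 2 + β ^ 2 * ‖b‖ ^ 2 := by
  rw [← real_inner_self_eq_norm_sq, inner_smul_add_smul_of_inner_eq_zero h]
  ring

theorem anglePres_one_add_abs (c : ℝ) (T : E →L[ℝ] F) : AnglePres c (1 + |c|) T := by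
  intro x y _
  calc |⟪T x, T y⟫ - c * ‖T x‖ * ‖T y‖| ≤ |⟪T x, T y⟫| + |c * ‖T x‖ * ‖T y‖| := abs_sub _ _
    _ ≤ ‖T x‖ * ‖T y‖ + |c| * ‖T x‖ * ‖T y‖ := by
      rw [abs_mul, abs_mul, abs_norm, abs_norm]
      gcongr
      exact abs_real_inner_le_norm _ _
    _ = (1 + |c|) * ‖T x‖ * ‖T y‖ := by ring

theorem epsHat_nonneg (c : ℝ) (T : E →L[ℝ] F) : 0 ≤ epsHat c T :=
  Real.sInf_nonneg fun _ hε => hε.1.1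

theorem epsHat_le_one_add_abs (c : ℝ) (T : E →L[ℝ] F) : epsHat c T ≤ 1 + |c| :=
  csInf_le ⟨0, fun _ hε => hε.1.1⟩ ⟨⟨by positivity, le_rfl⟩, anglePres_one_add_abs c T⟩

theorem le_epsHat {c a : ℝ} {T : E →L[ℝ] F} (h : ∀ ε, AnglePres c ε T → a ≤ ε) : a ≤ epsHat c T :=
  le_csInf ⟨1 + |c|, ⟨by positivity, le_rfl⟩, anglePres_one_add_abs c T⟩ fun ε hε => h ε hε.2

theorem AnglePres.mul_abs_sub_le {c ε : ℝ} {S : E →L[ℝ] F} (hS : AnglePres c ε S) (hc : |c| ≤ 1)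
    {e₁ e₂ : E} (he₁ : ‖e₁‖ = 1) (he₂ : ‖e₂‖ = 1) (he : ⟪e₁, e₂⟫ = 0) (hSe : ⟪S e₁, S e₂⟫ = 0) :
    (1 - c ^ 2) * |‖S e₁‖ ^ 2 - ‖S e₂‖ ^ 2|
      ≤ ε * ((1 + c) * ‖S e₁‖ ^ 2 + (1 - c) * ‖S e₂‖ ^ 2) := by
  obtain ⟨hc₁, hc₂⟩ := abs_le.1 hc
  set μ₁ := ‖S e₁‖ ^ 2
  set μ₂ := ‖S e₂‖ ^ 2
  set P := √((1 + c) / 2)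
  set Q := √((1 - c) / 2)
  have hP : P ^ 2 = (1 + c) / 2 := Real.sq_sqrt (by linarith)
  have hQ : Q ^ 2 = (1 - c) / 2 := Real.sq_sqrt (by linarith)
  -- `P e₁ ± Q e₂` are unit vectors at angle `c` whose images have equal norms
  have hz : ∀ s, s ^ 2 = Q ^ 2 → ‖P • e₁ + s • e₂‖ = 1 := fun s hs =>
    (pow_eq_one_iff_of_nonneg (norm_nonneg _) two_ne_zero).1 <| by
      rw [norm_smul_add_smul_sq_of_inner_eq_zero he, he₁, he₂, hs, hP, hQ]; ring
  have hSz : ∀ s, s ^ 2 = Q ^ 2 → ‖S (P • e₁ + s • e₂)‖ = √(P ^ 2 * μ₁ + Q ^ 2 * μ₂) := by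
    intro s hs
    rw [← hs, ← norm_smul_add_smul_sq_of_inner_eq_zero hSe, Real.sqrt_sq (norm_nonneg _),
      map_add, map_smul, map_smul]
  have hprod : ‖S (P • e₁ + Q • e₂)‖ * ‖S (P • e₁ + (-Q) • e₂)‖
      = ((1 + c) * μ₁ + (1 - c) * μ₂) / 2 := by
    rw [hSz Q rfl, hSz (-Q) (neg_sq Q), Real.mul_self_sqrt (by positivity), hP, hQ]
    ring
  have hinner : ⟪S (P • e₁ + Q • e₂), S (P • e₁ + (-Q) • e₂)⟫
      = ((1 + c) * μ₁ - (1 - c) * μ₂) / 2 := by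
    simp only [map_add, map_smul]
    rw [inner_smul_add_smul_of_inner_eq_zero hSe]
    linear_combination μ₁ * hP - μ₂ * hQ
  have key := hS (P • e₁ + Q • e₂) (P • e₁ + (-Q) • e₂) <| by
    rw [inner_smul_add_smul_of_inner_eq_zero he, hz Q rfl, hz (-Q) (neg_sq Q), he₁, he₂]
    linear_combination hP - hQ
  rw [mul_assoc, mul_assoc, hprod, hinner,
    show ((1 + c) * μ₁ - (1 - c) * μ₂) / 2 - c * (((1 + c) * μ₁ + (1 - c) * μ₂) / 2)
      = (1 - c ^ 2) / 2 * (μ₁ - μ₂) by ring,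
    abs_mul, abs_of_nonneg (by nlinarith)] at key
  linarith

theorem AnglePres.mul_sub_le {c ε : ℝ} {S : E →L[ℝ] F} (hS : AnglePres c ε S) (hc : |c| ≤ 1)
    {e₁ e₂ : E} (he₁ : ‖e₁‖ = 1) (he₂ : ‖e₂‖ = 1) (he : ⟪e₁, e₂⟫ = 0) (hSe : ⟪S e₁, S e₂⟫ = 0)
    (hle : ‖S e₂‖ ≤ ‖S e₁‖) :
    (1 - c ^ 2) * (‖S e₁‖ ^ 2 - ‖S e₂‖ ^ 2)
      ≤ ε * ((1 - |c|) * ‖S e₁‖ ^ 2 + (1 + |c|) * ‖S e₂‖ ^ 2) := by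
  have hsq : 0 ≤ ‖S e₁‖ ^ 2 - ‖S e₂‖ ^ 2 := sub_nonneg.2 (pow_le_pow_left₀ (norm_nonneg _) hle 2)
  rcases le_or_gt 0 c with hc₀ | hc₀
  · have h := hS.mul_abs_sub_le hc he₂ he₁ (by rwa [real_inner_comm])
      (by rwa [real_inner_comm])
    rw [abs_sub_comm, abs_of_nonneg hsq] at h
    rw [abs_of_nonneg hc₀]
    linarith
  · have h := hS.mul_abs_sub_le hc he₁ he₂ he hSe
    rw [abs_of_nonneg hsq] at h
    rw [abs_of_neg hc₀]
    linarith

theorem exists_norm_eq_one_inner_eq_zero_mem_span_pair {x y : E} (hx : ‖x‖ = 1)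
    (hy : ∀ d : ℝ, y ≠ d • x) : ∃ f : E, ‖f‖ = 1 ∧ ⟪x, f⟫ = 0 ∧ y ∈ span ℝ {x, f} := by
  set g := y - ⟪x, y⟫ • x
  have hg : g ≠ 0 := sub_ne_zero.2 (hy _)
  refine ⟨‖g‖⁻¹ • g, norm_smul_inv_norm hg, ?_, mem_span_pair.2 ⟨⟪x, y⟫, ‖g‖, ?_⟩⟩
  · rw [real_inner_smul_right, inner_sub_right, real_inner_smul_right, real_inner_self_eq_norm_sq,
      hx]
    ring
  · rw [smul_smul, mul_inv_cancel₀ (norm_ne_zero_iff.2 hg), one_smul]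
    exact add_sub_cancel _ _

theorem exists_orthonormal_pair_inner_map_eq_zero (S : E →L[ℝ] F) {u v : E} (hu : ‖u‖ = 1)
    (hv : ‖v‖ = 1) (huv : ⟪u, v⟫ = 0) :
    ∃ e₁ e₂ : E, ‖e₁‖ = 1 ∧ ‖e₂‖ = 1 ∧ ⟪e₁, e₂⟫ = 0 ∧ ⟪S e₁, S e₂⟫ = 0 ∧ ‖S e₂‖ ≤ ‖S e₁‖ ∧
      span ℝ {u, v} ≤ span ℝ {e₁, e₂} := by
  obtain ⟨p, q, hpq, hrot⟩ :=
    exists_sq_add_sq_eq_one_mul_add_mul_eq_zero (‖S v‖ ^ 2 - ‖S u‖ ^ 2) ⟪S u, S v⟫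
  have hnorm : ∀ α β : ℝ, α ^ 2 + β ^ 2 = 1 → ‖α • u + β • v‖ = 1 := fun α β h =>
    (pow_eq_one_iff_of_nonneg (norm_nonneg _) two_ne_zero).1 <| by
      rw [norm_smul_add_smul_sq_of_inner_eq_zero huv, hu, hv]; linear_combination h
  have he₁ := hnorm p q hpq
  have he₂ := hnorm (-q) p (by linear_combination hpq)
  have he : ⟪p • u + q • v, (-q) • u + p • v⟫ = 0 := by
    rw [inner_smul_add_smul_of_inner_eq_zero huv, hu, hv]; ring
  have hSe : ⟪S (p • u + q • v), S ((-q) • u + p • v)⟫ = 0 := by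
    simp only [map_add, map_smul, inner_add_left, inner_add_right, real_inner_smul_left,
      real_inner_smul_right, real_inner_comm (S u) (S v), real_inner_self_eq_norm_sq]
    linear_combination hrot
  have hspan : span ℝ {u, v} ≤ span ℝ {p • u + q • v, (-q) • u + p • v} := by
    rw [span_le, Set.insert_subset_iff, Set.singleton_subset_iff]
    exact ⟨mem_span_pair.2 ⟨p, -q, by linear_combination (norm := module) hpq • u⟩,
      mem_span_pair.2 ⟨q, p, by linear_combination (norm := module) hpq • v⟩⟩
  rcases le_total ‖S ((-q) • u + p • v)‖ ‖S (p • u + q • v)‖ with hle | hle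
  · exact ⟨_, _, he₁, he₂, he, hSe, hle, hspan⟩
  · exact ⟨_, _, he₂, he₁, by rwa [real_inner_comm], by rwa [real_inner_comm], hle,
      by rwa [Set.pair_comm ((-q) • u + p • v)]⟩

theorem eq_of_inner_map_smul_eq {c d : ℝ} {S : E →L[ℝ] F} (hS : Function.Injective S) {x : E}
    (hx : x ≠ 0) (hd : |d| = 1) (h : ⟪S x, S (d • x)⟫ = c * ‖S x‖ * ‖S (d • x)‖) : d = c := by
  have hSx : ‖S x‖ ^ 2 ≠ 0 := pow_ne_zero 2 (norm_ne_zero_iff.2 ((map_ne_zero_iff S hS).2 hx))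
  rw [map_smul, real_inner_smul_right, norm_smul, Real.norm_eq_abs, hd, one_mul,
    real_inner_self_eq_norm_sq] at h
  exact mul_right_cancel₀ hSx (by linear_combination h)

theorem abs_inner_sub_le_epsHat {c : ℝ} {S : E →L[ℝ] F} (hS : Function.Injective S)
    (hc : |c| ≤ 1) {x y : E} (hx : ‖x‖ = 1) (hy : ‖y‖ = 1)
    (h : ⟪S x, S y⟫ = c * ‖S x‖ * ‖S y‖) : |⟪x, y⟫ - c| ≤ epsHat c S := by
  by_cases hxy : ∃ d : ℝ, y = d • x
  · obtain ⟨d, rfl⟩ := hxy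
    have hd : |d| = 1 := by rwa [norm_smul, hx, mul_one, Real.norm_eq_abs] at hy
    rw [real_inner_smul_right, real_inner_self_eq_norm_sq, hx, one_pow, mul_one,
      eq_of_inner_map_smul_eq hS (norm_ne_zero_iff.1 (by simp [hx])) hd h, sub_self, abs_zero]
    exact epsHat_nonneg c S
  obtain ⟨f, hf, hxf, hyf⟩ :=
    exists_norm_eq_one_inner_eq_zero_mem_span_pair hx fun d hd => hxy ⟨d, hd⟩
  obtain ⟨e₁, e₂, he₁, he₂, he, hSe, hle, hspan⟩ :=
    exists_orthonormal_pair_inner_map_eq_zero S hx hf hxf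
  obtain ⟨x₁, x₂, rfl⟩ := mem_span_pair.1 (hspan (subset_span (Set.mem_insert x {f})))
  obtain ⟨y₁, y₂, rfl⟩ := mem_span_pair.1 (hspan hyf)
  have hcoord : ∀ α β : ℝ, ‖α • e₁ + β • e₂‖ ^ 2 = α ^ 2 + β ^ 2 := fun α β => by
    rw [norm_smul_add_smul_sq_of_inner_eq_zero he, he₁, he₂]; ring
  have hScoord : ∀ α β : ℝ,
      ‖S (α • e₁ + β • e₂)‖ ^ 2 = ‖S e₁‖ ^ 2 * α ^ 2 + ‖S e₂‖ ^ 2 * β ^ 2 := fun α β => by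
    rw [map_add, map_smul, map_smul, norm_smul_add_smul_sq_of_inner_eq_zero hSe]; ring
  have hx' : x₁ ^ 2 + x₂ ^ 2 = 1 := by rw [← hcoord, hx, one_pow]
  have hy' : y₁ ^ 2 + y₂ ^ 2 = 1 := by rw [← hcoord, hy, one_pow]
  have h' : ‖S e₁‖ ^ 2 * x₁ * y₁ + ‖S e₂‖ ^ 2 * x₂ * y₂
      = c * ‖S (x₁ • e₁ + x₂ • e₂)‖ * ‖S (y₁ • e₁ + y₂ • e₂)‖ := by
    rw [← h, map_add, map_add, map_smul, map_smul, map_smul, map_smul,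
      inner_smul_add_smul_of_inner_eq_zero hSe]
    ring
  have key := abs_sub_mul_le_of_coords (sq_nonneg ‖S e₂‖) (pow_le_pow_left₀ (norm_nonneg _) hle 2)
    hc hx' hy' (norm_nonneg _) (norm_nonneg _) (hScoord x₁ x₂) (hScoord y₁ y₂) h'
  have hSe₂ : 0 < ‖S e₂‖ :=
    norm_pos_iff.2 <| (map_ne_zero_iff S hS).2 <| norm_ne_zero_iff.1 (by simp [he₂])
  have hD : 0 < (1 - |c|) * ‖S e₁‖ ^ 2 + (1 + |c|) * ‖S e₂‖ ^ 2 := by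
    have : 0 ≤ 1 - |c| := by linarith
    positivity
  rw [inner_smul_add_smul_of_inner_eq_zero he, he₁, he₂, one_pow, mul_one, mul_one]
  exact le_epsHat fun ε hε =>
    le_of_mul_le_mul_right (key.trans (hε.mul_sub_le hc he₁ he₂ he hSe hle)) hD

theorem abs_inner_sub_le_epsHat_mul {c : ℝ} {S : E →L[ℝ] F} (hS : Function.Injective S)
    (hc : |c| ≤ 1) {x y : E} (h : ⟪S x, S y⟫ = c * ‖S x‖ * ‖S y‖) :
    |⟪x, y⟫ - c * ‖x‖ * ‖y‖| ≤ epsHat c S * ‖x‖ * ‖y‖ := by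
  rcases eq_or_ne x 0 with rfl | hx
  · simp
  rcases eq_or_ne y 0 with rfl | hy
  · simp
  have hxy : 0 < ‖x‖ * ‖y‖ := mul_pos (norm_pos_iff.2 hx) (norm_pos_iff.2 hy)
  have hx₁ : ‖(‖x‖⁻¹ : ℝ) • x‖ = 1 := norm_smul_inv_norm hx
  have hy₁ : ‖(‖y‖⁻¹ : ℝ) • y‖ = 1 := norm_smul_inv_norm hy
  have hunit := abs_inner_sub_le_epsHat hS hc hx₁ hy₁ <| by
    simp only [map_smul, real_inner_smul_left, real_inner_smul_right, norm_smul, h, norm_inv,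
      norm_norm]
    ring
  rw [real_inner_smul_left, real_inner_smul_right] at hunit
  calc |⟪x, y⟫ - c * ‖x‖ * ‖y‖| = (‖x‖ * ‖y‖) * |‖x‖⁻¹ * (‖y‖⁻¹ * ⟪x, y⟫) - c| := by
        rw [← abs_of_pos hxy, ← abs_mul]
        congr 1
        field_simp
    _ ≤ (‖x‖ * ‖y‖) * epsHat c S := by gcongr
    _ = epsHat c S * ‖x‖ * ‖y‖ := by ring

theorem anglePres_symm_epsHat {c : ℝ} (hc : |c| ≤ 1) (T : E ≃L[ℝ] F) :
    AnglePres c (epsHat c (T : E →L[ℝ] F)) (T.symm : F →L[ℝ] E) := by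
  intro u v huv
  simpa using abs_inner_sub_le_epsHat_mul (S := (T : E →L[ℝ] F)) T.injective hc
    (x := T.symm u) (y := T.symm v) (by simpa using huv)

theorem epsHat_symm_le {c : ℝ} (hc : |c| ≤ 1) (T : E ≃L[ℝ] F) :
    epsHat c (T.symm : F →L[ℝ] E) ≤ epsHat c (T : E →L[ℝ] F) :=
  csInf_le ⟨0, fun _ hε => hε.1.1⟩
    ⟨⟨epsHat_nonneg c _, epsHat_le_one_add_abs c _⟩, anglePres_symm_epsHat hc T⟩

end

theorem stmt_17_general {H : Type*} [NormedAddCommGroup H] [InnerProductSpace ℝ H]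
    (c : ℝ) (hc : c ∈ Set.Ioo (-1 : ℝ) 1) (T : H ≃L[ℝ] H) :
    epsHat c (T.symm : H →L[ℝ] H) = epsHat c (T : H →L[ℝ] H) := by
  have hc' : |c| ≤ 1 := abs_le.2 ⟨hc.1.le, hc.2.le⟩
  refine (epsHat_symm_le hc' T).antisymm ?_
  simpa using epsHat_symm_le hc' T.symm

theorem stmt_17 {H : Type*} [NormedAddCommGroup H] [InnerProductSpace ℝ H] [CompleteSpace H]
    (hH : 2 ≤ Module.rank ℝ H)
    (c : ℝ) (hc : c ∈ Set.Ioo (-1 : ℝ) 1) (T : H ≃L[ℝ] H) :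
    epsHat c (T.symm : H →L[ℝ] H) = epsHat c (T : H →L[ℝ] H) :=
  stmt_17_general c hc T
end
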